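/- arXiv:2207.08572 — 4 statements merged into one kernel-verified Lean document; each statement's English description precedes it below -/
import Mathlib

section
/- Let M be a non-trivial model of the free equality axioms FEA(L), and let s and t be terms over L that are both not variables. Then: (1) the set Inst_M(s) of M-instances of s is not all of the set of elements of M, i.e., there is an element of M that is not the value of s under any valuation; (2) if s and t have different principal (outermost) function symbols, then Inst_M(s) ∩ Inst_M(t) = ∅. -/
/-- A first-order language: function symbols with arities and predicate
symbols with arities.  Variables are natural numbers. -/
structure FOLang where
  Func : Type
  farity : Func → ℕ
  Pred : Type
  parity : Pred → ℕ

/-- The language has at least one constant. -/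
def FOLang.HasConst (L : FOLang) : Prop := ∃ f : L.Func, L.farity f = 0

/-- Terms over a language. -/
inductive FOTerm (L : FOLang) : Type where
  | var : ℕ → FOTerm L
  | func : (f : L.Func) → (Fin (L.farity f) → FOTerm L) → FOTerm L

namespace FOTerm

variable {L : FOLang}

/-- The (finite) set of variables occurring in a term. -/
def vars : FOTerm L → Finset ℕ
  | .var x => {x}
  | .func _ ts => Finset.univ.biUnion fun i => (ts i).vars

/-- Application of a (total) substitution to a term: simultaneously replace
every variable `x` by the term `f x`. -/
def applyT (f : ℕ → FOTerm L) : FOTerm L → FOTerm L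
  | .var x => f x
  | .func g ts => .func g fun i => (ts i).applyT f

end FOTerm

/-- A pre-interpretation: a non-empty universe together with an
interpretation of the function symbols. -/
structure FOStruc (L : FOLang) where
  carrier : Type
  inhab : Nonempty carrier
  funcs : (f : L.Func) → (Fin (L.farity f) → carrier) → carrier

/-- Evaluation of a term under a valuation. -/
def FOTerm.eval {L : FOLang} (M : FOStruc L) (h : ℕ → M.carrier) : FOTerm L → M.carrier
  | .var x => h x
  | .func f ts => M.funcs f fun i => (ts i).eval M h

/-- The set of `M`-instances of a term: values of the term under all
valuations. -/
def InstT {L : FOLang} (M : FOStruc L) (t : FOTerm L) : Set M.carrier :=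
  { a | ∃ h : ℕ → M.carrier, t.eval M h = a }

/-- `M` is a model of the free equality axioms `FEA(L)`. -/
structure IsFEA {L : FOLang} (M : FOStruc L) : Prop where
  inj : ∀ f : L.Func, Function.Injective (M.funcs f)
  disj : ∀ f g : L.Func, f ≠ g → ∀ a b, M.funcs f a ≠ M.funcs g b
  occ : ∀ (x : ℕ) (t : FOTerm L), t ≠ .var x → x ∈ t.vars →
      ∀ h : ℕ → M.carrier, h x ≠ t.eval M h

/-- The domain has at least two elements. -/
def FOStruc.Nontriv {L : FOLang} (M : FOStruc L) : Prop :=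
  ∃ a b : M.carrier, a ≠ b

/-- The difference set `Diff(s,t)`: `InDiff s t (s',t')` means the pair
`(s',t')` belongs to `Diff(s,t)`. -/
inductive InDiff {L : FOLang} : FOTerm L → FOTerm L → FOTerm L × FOTerm L → Prop where
  | var (x : ℕ) : InDiff (.var x) (.var x) (.var x, .var x)
  | varVar {x y : ℕ} : x ≠ y → InDiff (.var x) (.var y) (.var x, .var y)
  | varFunc (x : ℕ) (f : L.Func) (ts : Fin (L.farity f) → FOTerm L) :
      InDiff (.var x) (.func f ts) (.var x, .func f ts)
  | funcVar (f : L.Func) (ss : Fin (L.farity f) → FOTerm L) (y : ℕ) :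
      InDiff (.func f ss) (.var y) (.func f ss, .var y)
  | funcFunc {f g : L.Func} (ss : Fin (L.farity f) → FOTerm L)
      (ts : Fin (L.farity g) → FOTerm L) : f ≠ g →
      InDiff (.func f ss) (.func g ts) (.func f ss, .func g ts)
  | func {f : L.Func} (ss ts : Fin (L.farity f) → FOTerm L) (i : Fin (L.farity f))
      {p : FOTerm L × FOTerm L} :
      InDiff (ss i) (ts i) p → InDiff (.func f ss) (.func f ts) p
/-- An interpretation: a pre-interpretation together with an interpretation
of the predicate symbols. -/
structure FOInterp (L : FOLang) extends FOStruc L where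
  preds : (p : L.Pred) → (Fin (L.parity p) → carrier) → Prop

/-- First-order formulas. -/
inductive FOForm (L : FOLang) : Type where
  | tru : FOForm L
  | fal : FOForm L
  | eq : FOTerm L → FOTerm L → FOForm L
  | atom : (p : L.Pred) → (Fin (L.parity p) → FOTerm L) → FOForm L
  | not : FOForm L → FOForm L
  | and : FOForm L → FOForm L → FOForm L
  | or : FOForm L → FOForm L → FOForm L
  | imp : FOForm L → FOForm L → FOForm L
  | iff : FOForm L → FOForm L → FOForm L
  | ex : ℕ → FOForm L → FOForm L
  | all : ℕ → FOForm L → FOForm L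

namespace FOForm

variable {L : FOLang}

/-- Tarskian satisfaction of a formula in an interpretation under a valuation. -/
def Sat (I : FOInterp L) (h : ℕ → I.carrier) : FOForm L → Prop
  | .tru => True
  | .fal => False
  | .eq s t => s.eval I.toFOStruc h = t.eval I.toFOStruc h
  | .atom p ts => I.preds p fun i => (ts i).eval I.toFOStruc h
  | .not F => ¬ F.Sat I h
  | .and F G => F.Sat I h ∧ G.Sat I h
  | .or F G => F.Sat I h ∨ G.Sat I h
  | .imp F G => F.Sat I h → G.Sat I h
  | .iff F G => F.Sat I h ↔ G.Sat I h
  | .ex x F => ∃ d : I.carrier, F.Sat I (Function.update h x d)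
  | .all x F => ∀ d : I.carrier, F.Sat I (Function.update h x d)

/-- Free variables of a formula. -/
def fv : FOForm L → Finset ℕ
  | .tru => ∅
  | .fal => ∅
  | .eq s t => s.vars ∪ t.vars
  | .atom _ ts => Finset.univ.biUnion fun i => (ts i).vars
  | .not F => F.fv
  | .and F G => F.fv ∪ G.fv
  | .or F G => F.fv ∪ G.fv
  | .imp F G => F.fv ∪ G.fv
  | .iff F G => F.fv ∪ G.fv
  | .ex x F => F.fv.erase x
  | .all x F => F.fv.erase x

end FOForm

/-- The interpretation obtained from a pre-interpretation by interpreting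
every predicate symbol as the empty relation (for formulas without atoms
the choice is irrelevant). -/
def FOStruc.toInterp {L : FOLang} (M : FOStruc L) : FOInterp L :=
  { toFOStruc := M, preds := fun _ _ => False }

/-- Satisfaction of an (equational) formula in a pre-interpretation. -/
def ESat {L : FOLang} (M : FOStruc L) (h : ℕ → M.carrier) (F : FOForm L) : Prop :=
  F.Sat M.toInterp h

/-- The set of solutions of a formula in a pre-interpretation. -/
def SolE {L : FOLang} (M : FOStruc L) (F : FOForm L) : Set (ℕ → M.carrier) :=
  { h | ESat M h F }

/-- EQ-formulas: built from `True`, `False` and equations using `∧` and `∃`. -/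
inductive IsEQ {L : FOLang} : FOForm L → Prop where
  | tru : IsEQ .tru
  | fal : IsEQ .fal
  | eq (s t : FOTerm L) : IsEQ (.eq s t)
  | and {F G : FOForm L} : IsEQ F → IsEQ G → IsEQ (.and F G)
  | ex (x : ℕ) {F : FOForm L} : IsEQ F → IsEQ (.ex x F)

/-- Equational formulas: first-order formulas with no atoms other than
equations. -/
inductive IsEquational {L : FOLang} : FOForm L → Prop where
  | tru : IsEquational .tru
  | fal : IsEquational .fal
  | eq (s t : FOTerm L) : IsEquational (.eq s t)
  | not {F : FOForm L} : IsEquational F → IsEquational (.not F)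
  | and {F G : FOForm L} : IsEquational F → IsEquational G → IsEquational (.and F G)
  | or {F G : FOForm L} : IsEquational F → IsEquational G → IsEquational (.or F G)
  | imp {F G : FOForm L} : IsEquational F → IsEquational G → IsEquational (.imp F G)
  | iff {F G : FOForm L} : IsEquational F → IsEquational G → IsEquational (.iff F G)
  | ex (x : ℕ) {F : FOForm L} : IsEquational F → IsEquational (.ex x F)
  | all (x : ℕ) {F : FOForm L} : IsEquational F → IsEquational (.all x F)

/-- `F ≼ F'` : `F → F'` is true in every model of `FEA(L)`. -/
def EQle {L : FOLang} (F F' : FOForm L) : Prop :=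
  ∀ M : FOStruc L, IsFEA M → ∀ h : ℕ → M.carrier, ESat M h F → ESat M h F'

/-- `F ≈ F'` : `F ↔ F'` is true in every model of `FEA(L)`. -/
def EQequiv {L : FOLang} (F F' : FOForm L) : Prop := EQle F F' ∧ EQle F' F

/-- `F ≺ F'`. -/
def EQlt {L : FOLang} (F F' : FOForm L) : Prop := EQle F F' ∧ ¬ EQequiv F F'

/-- The conjunction `x₁ = s₁ ∧ … ∧ xₙ = sₙ`. -/
def conjOf {L : FOLang} : List (ℕ × FOTerm L) → FOForm L
  | [] => .tru
  | [p] => .eq (.var p.1) p.2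
  | p :: rest => .and (.eq (.var p.1) p.2) (conjOf rest)

/-- The formula `(∃ z₁) … (∃ z_k) F`. -/
def exOf {L : FOLang} (zs : List ℕ) (F : FOForm L) : FOForm L :=
  zs.foldr .ex F

/-- The disjunction `F₁ ∨ … ∨ Fₙ`. -/
def disjOf {L : FOLang} : List (FOForm L) → FOForm L
  | [] => .fal
  | [F] => F
  | F :: rest => .or F (disjOf rest)

/-- A formula is in solved form if it is `True`, `False`, or of the shape
`∃ z₁ … ∃ z_k (x₁ = s₁ ∧ … ∧ xₙ = sₙ)` where the `xᵢ` and `z_j` are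
pairwise distinct, no `xᵢ` occurs in any right-hand side, every `z_j`
occurs in the conjunction, and no `sᵢ` is one of the `z_j`. -/
def SolvedForm {L : FOLang} (F : FOForm L) : Prop :=
  F = .tru ∨ F = .fal ∨
    ∃ (zs : List ℕ) (eqs : List (ℕ × FOTerm L)),
      eqs ≠ [] ∧
      F = exOf zs (conjOf eqs) ∧
      (eqs.map Prod.fst ++ zs).Nodup ∧
      (∀ p ∈ eqs, ∀ q ∈ eqs, p.1 ∉ q.2.vars) ∧
      (∀ z ∈ zs, ∃ p ∈ eqs, z ∈ p.2.vars) ∧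
      (∀ z ∈ zs, ∀ p ∈ eqs, p.2 ≠ .var z)

/-- The projection of an EQ-formula onto a finite set of variables:
existentially quantify the free variables not in `X`; the projection of
`False` is `False`. -/
def projE {L : FOLang} (E : FOForm L) (X : Finset ℕ) : FOForm L :=
  match E with
  | .fal => .fal
  | E => exOf ((E.fv \ X).sort (· ≤ ·)) E

/-- The universal closure of a formula. -/
def univClosure {L : FOLang} (F : FOForm L) : FOForm L :=
  (F.fv.sort (· ≤ ·)).foldr .all F

/-- A formula is valid if it is true in every interpretation (under every
valuation). -/
def FOValid {L : FOLang} (F : FOForm L) : Prop :=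
  ∀ (I : FOInterp L) (h : ℕ → I.carrier), F.Sat I h

/-- An EQ-formula is consistent if it has a solution in some model of the
free equality axioms. -/
def EQConsistent {L : FOLang} (E : FOForm L) : Prop :=
  ∃ M : FOStruc L, IsFEA M ∧ ∃ h : ℕ → M.carrier, ESat M h E
/-- Ground terms: terms with no variables. -/
def GroundTerm (L : FOLang) : Type := { t : FOTerm L // t.vars = ∅ }

/-- The Herbrand pre-interpretation: its domain is the set of ground terms
and function symbols are interpreted formally. -/
def Herbrand (L : FOLang) (hc : L.HasConst) : FOStruc L where
  carrier := GroundTerm L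
  inhab := by
    obtain ⟨f, hf⟩ := hc
    refine ⟨⟨.func f (fun i => Fin.elim0 (Fin.cast hf i)), ?_⟩⟩
    ext x
    simp only [FOTerm.vars, Finset.mem_biUnion, Finset.mem_univ, true_and,
      Finset.notMem_empty, iff_false, not_exists]
    intro i
    exact Fin.elim0 (Fin.cast hf i)
  funcs := fun f ts => ⟨.func f (fun i => (ts i).1), by
    ext x
    simp only [FOTerm.vars, Finset.mem_biUnion, Finset.mem_univ, true_and,
      Finset.notMem_empty, iff_false, not_exists]
    intro i hx
    rw [(ts i).2] at hx
    exact Finset.notMem_empty x hx⟩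

/-- The language obtained by adding a countably infinite set of new
constants. -/
def addConsts (L : FOLang) : FOLang where
  Func := L.Func ⊕ ℕ
  farity := Sum.elim L.farity fun _ => 0
  Pred := L.Pred
  parity := L.parity

/-- The canonical embedding of terms into the extended language. -/
def FOTerm.lift {L : FOLang} : FOTerm L → FOTerm (addConsts L)
  | .var x => .var x
  | .func f ts => .func (Sum.inl f) fun i => (ts i).lift

/-- The canonical embedding of formulas into the extended language. -/
def FOForm.lift {L : FOLang} : FOForm L → FOForm (addConsts L)
  | .tru => .tru
  | .fal => .fal
  | .eq s t => .eq s.lift t.lift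
  | .atom p ts => .atom p fun i => (ts i).lift
  | .not F => .not F.lift
  | .and F G => .and F.lift G.lift
  | .or F G => .or F.lift G.lift
  | .imp F G => .imp F.lift G.lift
  | .iff F G => .iff F.lift G.lift
  | .ex x F => .ex x F.lift
  | .all x F => .all x F.lift
/-- A finite substitution: a finite set of variables (its domain) together
with an assignment of terms to variables which is the identity outside the
domain. -/
structure FinSubst (L : FOLang) where
  dom : Finset ℕ
  map : ℕ → FOTerm L
  outside : ∀ x ∉ dom, map x = .var x

namespace FinSubst

variable {L : FOLang}

/-- `Range(σ)`: the set of variables occurring in the terms `σ x`, `x ∈ Dom(σ)`. -/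
def range (σ : FinSubst L) : Finset ℕ :=
  σ.dom.biUnion fun x => (σ.map x).vars

/-- `θ` is an extension of `σ`. -/
def Extends (θ σ : FinSubst L) : Prop :=
  σ.dom ⊆ θ.dom ∧ ∀ x ∈ σ.dom, θ.map x = σ.map x

/-- `θ` is a regular extension of `σ`: it extends `σ` and maps
`Dom(θ) \ Dom(σ)` injectively into the variables not in `Range(σ)`. -/
def RegExt (θ σ : FinSubst L) : Prop :=
  Extends θ σ ∧
  (∀ x ∈ θ.dom, x ∉ σ.dom → ∃ y : ℕ, y ∉ σ.range ∧ θ.map x = .var y) ∧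
  Set.InjOn θ.map ↑(θ.dom \ σ.dom)

/-- The set of `M`-instances of a substitution. -/
def Inst {L : FOLang} (M : FOStruc L) (σ : FinSubst L) : Set (ℕ → M.carrier) :=
  { h | ∃ g : ℕ → M.carrier, ∀ x ∈ σ.dom, h x = (σ.map x).eval M g }

open Classical in
/-- The restriction of `σ` to `Dom(σ) ∩ X`. -/
noncomputable def restrict (σ : FinSubst L) (X : Set ℕ) : FinSubst L where
  dom := σ.dom.filter fun x => x ∈ X
  map := fun x => if x ∈ σ.dom ∧ x ∈ X then σ.map x else .var x
  outside := fun x hx => if_neg fun h => hx (Finset.mem_filter.2 ⟨h.1, h.2⟩)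

/-- The composition `σθ`, defined on `Dom(σ)` by `x ↦ (σ x)θ`. -/
def comp (σ θ : FinSubst L) : FinSubst L where
  dom := σ.dom
  map := fun x => if x ∈ σ.dom then (σ.map x).applyT θ.map else .var x
  outside := fun _ hx => if_neg hx

/-- `σ ≼ θ` : `θ` is more general than `σ`. -/
def Le (σ θ : FinSubst L) : Prop :=
  ∃ σ' θ' τ : FinSubst L,
    RegExt σ' σ ∧ RegExt θ' θ ∧ σ'.dom = θ'.dom ∧
    θ'.range ⊆ τ.dom ∧ σ' = θ'.comp τ

/-- `σ ≈ θ`. -/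
def Equiv (σ θ : FinSubst L) : Prop := Le σ θ ∧ Le θ σ

/-- A permutation: a substitution mapping its domain injectively to
variables. -/
def IsPerm (τ : FinSubst L) : Prop :=
  (∀ x ∈ τ.dom, ∃ y : ℕ, τ.map x = .var y) ∧ Set.InjOn τ.map ↑τ.dom

/-- The empty substitution. -/
def empty (L : FOLang) : FinSubst L where
  dom := ∅
  map := fun x => .var x
  outside := fun _ _ => rfl

/-- The kernel of a substitution: the intersection of all sets `X` of
variables such that `σ↾X ≈ σ`. -/
def kernel (σ : FinSubst L) : Set ℕ :=
  ⋂₀ { X : Set ℕ | Equiv (σ.restrict X) σ }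

end FinSubst

noncomputable section

theorem exists_notin_finset (s : Finset ℕ) : ∃ n : ℕ, n ∉ s :=
  ⟨s.sup id + 1, fun h => by
    have := Finset.le_sup (f := id) h
    simp only [id] at this
    omega⟩

/-- The first variable not belonging to a given finite set of variables. -/
def freshVar (s : Finset ℕ) : ℕ := Nat.find (exists_notin_finset s)

/-- Insert a binding into a substitution. -/
def FinSubst.insertB {L : FOLang} (σ : FinSubst L) (x : ℕ) (t : FOTerm L) :
    FinSubst L where
  dom := insert x σ.dom
  map := Function.update σ.map x t
  outside := by
    intro z hz
    have hzx : z ≠ x := fun h => hz (h ▸ Finset.mem_insert_self x σ.dom)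
    have hzd : z ∉ σ.dom := fun h => hz (Finset.mem_insert_of_mem h)
    rw [Function.update_of_ne hzx]
    exact σ.outside z hzd

/-- One step of the regular-extension procedure: extend the substitution
with a binding for `x` (to itself if possible, otherwise to the first
variable not occurring in the range). -/
def regStep {L : FOLang} (acc : FinSubst L) (x : ℕ) : FinSubst L :=
  if x ∈ acc.dom then acc
  else acc.insertB x (.var (if x ∈ acc.range then freshVar acc.range else x))

/-- Restrict `σ` to the free variables of `F` and extend the result
regularly to a substitution whose domain is exactly `fv F`. -/
def FinSubst.extendFV {L : FOLang} (σ : FinSubst L) (F : FOForm L) : FinSubst L :=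
  (F.fv.sort (· ≤ ·)).foldl regStep (σ.restrict ↑F.fv)

/-- Capture-avoiding simultaneous substitution on formulas (bound variables
are renamed as needed). -/
def FOForm.applyF {L : FOLang} (f : ℕ → FOTerm L) : FOForm L → FOForm L
  | .tru => .tru
  | .fal => .fal
  | .eq s t => .eq (s.applyT f) (t.applyT f)
  | .atom p ts => .atom p fun i => (ts i).applyT f
  | .not F => .not (F.applyF f)
  | .and F G => .and (F.applyF f) (G.applyF f)
  | .or F G => .or (F.applyF f) (G.applyF f)
  | .imp F G => .imp (F.applyF f) (G.applyF f)
  | .iff F G => .iff (F.applyF f) (G.applyF f)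
  | .ex x G =>
      let R : Finset ℕ := (G.fv.erase x).biUnion fun z => (f z).vars
      let y : ℕ := if x ∈ R then freshVar R else x
      .ex y (G.applyF (Function.update f x (.var y)))
  | .all x G =>
      let R : Finset ℕ := (G.fv.erase x).biUnion fun z => (f z).vars
      let y : ℕ := if x ∈ R then freshVar R else x
      .all y (G.applyF (Function.update f x (.var y)))

/-- The application `Fσ` of a finite substitution to a formula: restrict
`σ` to the free variables of `F`, extend regularly to all of `fv F`, and
substitute capture-avoidingly. -/
def FOForm.applyS {L : FOLang} (σ : FinSubst L) (F : FOForm L) : FOForm L :=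
  F.applyF (σ.extendFV F).map

end
/-- The set of finite substitutions together with an added bottom element
`⊥` (represented by `none`): the extended preorder. -/
def LeBot {L : FOLang} : Option (FinSubst L) → Option (FinSubst L) → Prop
  | none, _ => True
  | some _, none => False
  | some σ, some θ => FinSubst.Le σ θ

/-- The induced equivalence on `Subst⊥`. -/
def EquivBot {L : FOLang} (a b : Option (FinSubst L)) : Prop :=
  LeBot a b ∧ LeBot b a

/-- The quotient of `Subst⊥` by `≈`. -/
def SubstQuot (L : FOLang) : Type := Quot (EquivBot (L := L))

/-- The induced partial order on the quotient `Subst⊥/≈`. -/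
def SubstQuotLe {L : FOLang} (a b : SubstQuot L) : Prop :=
  ∃ s t : Option (FinSubst L), Quot.mk _ s = a ∧ Quot.mk _ t = b ∧ LeBot s t

/-- EQ-formulas as a subtype. -/
def EQSub (L : FOLang) : Type := { F : FOForm L // IsEQ F }

/-- The quotient of the set of EQ-formulas by `≈`. -/
def EQQuot (L : FOLang) : Type :=
  Quot (fun a b : EQSub L => EQequiv a.1 b.1)

/-- The induced partial order on the quotient of EQ-formulas. -/
def EQQuotLe {L : FOLang} (a b : EQQuot L) : Prop :=
  ∃ E E' : EQSub L, Quot.mk _ E = a ∧ Quot.mk _ E' = b ∧ EQle E.1 E'.1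

/-- The substitution `{x₁↦s₁, …, xₙ↦sₙ, y₁↦y₁, …, y_k↦y_k}` associated
with a solved form with equations `eqs` and parameters `params`. -/
theorem lookup_eq_none_of_not_mem {L : FOLang} (x : ℕ) :
    ∀ eqs : List (ℕ × FOTerm L), x ∉ eqs.map Prod.fst → eqs.lookup x = none := by
  intro eqs
  induction eqs with
  | nil => intro _; rfl
  | cons p rest ih =>
    intro hx1
    have hp : p.1 ≠ x := by
      intro h
      exact hx1 (by simp [h])
    have hr : x ∉ rest.map Prod.fst := fun h => hx1 (by simp [h])
    have hxp : (x == p.1) = false := beq_eq_false_iff_ne.mpr fun h => hp h.symm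
    simp only [List.lookup, hxp]
    exact ih hr

def solvedSubst {L : FOLang} (eqs : List (ℕ × FOTerm L)) (params : Finset ℕ) :
    FinSubst L where
  dom := (eqs.map Prod.fst).toFinset ∪ params
  map := fun x => (eqs.lookup x).getD (.var x)
  outside := by
    intro x hx
    have hx1 : x ∉ eqs.map Prod.fst := fun h =>
      hx (Finset.mem_union_left _ (List.mem_toFinset.2 h))
    simp [lookup_eq_none_of_not_mem x eqs hx1]
/-- If `M` is a non-trivial model of `FEA(L)` and `s`, `t`
are non-variable terms, then (1) `Inst_M(s)` is not all of `M`, and (2) if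
`s` and `t` have different principal function symbols then
`Inst_M(s) ∩ Inst_M(t) = ∅`. -/
theorem nonvariable_instances {L : FOLang} (hc : L.HasConst)
    (M : FOStruc L) (hM : IsFEA M) (hnt : M.Nontriv)
    (s t : FOTerm L)
    (hs : ∀ x : ℕ, s ≠ .var x) (ht : ∀ x : ℕ, t ≠ .var x) :
    InstT M s ≠ Set.univ ∧
    ((∀ (f g : L.Func) (ss : Fin (L.farity f) → FOTerm L)
        (ts : Fin (L.farity g) → FOTerm L),
        s = .func f ss → t = .func g ts → f ≠ g) →
      InstT M s ∩ InstT M t = ∅) := by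
  constructor
  · cases s with
    | var x => exact absurd rfl (hs x)
    | func f ss =>
      intro hEq
      by_cases h0 : L.farity f = 0
      · -- Inst is a singleton; contradicts nontriviality
        obtain ⟨a, b, hab⟩ := hnt
        have key : ∀ h h' : ℕ → M.carrier,
            (FOTerm.func f ss).eval M h = (FOTerm.func f ss).eval M h' := by
          intro h h'
          simp only [FOTerm.eval]
          congr 1
          funext i
          exact absurd i.isLt (by omega)
        have ha : a ∈ InstT M (FOTerm.func f ss) := hEq ▸ Set.mem_univ a
        have hb : b ∈ InstT M (FOTerm.func f ss) := hEq ▸ Set.mem_univ b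
        obtain ⟨h1, e1⟩ := ha
        obtain ⟨h2, e2⟩ := hb
        exact hab (e1 ▸ e2 ▸ key h1 h2)
      · obtain ⟨c, hc0⟩ := hc
        have hcf : c ≠ f := fun h => h0 (h ▸ hc0)
        have he : M.funcs c (fun i => Fin.elim0 (Fin.cast hc0 i)) ∉
            InstT M (FOTerm.func f ss) := by
          rintro ⟨h1, e1⟩
          rw [FOTerm.eval] at e1
          exact hM.disj f c (Ne.symm hcf) _ _ e1
        exact he (hEq ▸ Set.mem_univ _)
  · intro hdiff
    cases s with
    | var x => exact absurd rfl (hs x)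
    | func f ss =>
      cases t with
      | var y => exact absurd rfl (ht y)
      | func g ts =>
        have hfg : f ≠ g := hdiff f g ss ts rfl rfl
        ext a
        simp only [Set.mem_inter_iff, Set.mem_empty_iff_false, iff_false, not_and]
        rintro ⟨h1, e1⟩ ⟨h2, e2⟩
        exact hM.disj f g hfg _ _ (e1.trans e2.symm)
end

section
/- Let M be a model of the free equality axioms FEA(L) and let s and t be terms over L. If h and g are valuations into M such that h(s) = g(t), then h(s') = g(t') for every pair (s', t') in the difference set Diff(s, t). -/
/-- If `M` is a model of `FEA(L)` and `h`, `g` are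
valuations with `h(s) = g(t)`, then `h(s') = g(t')` for every pair
`(s', t')` in the difference set `Diff(s, t)`. -/
theorem diff_set_eval {L : FOLang} (hc : L.HasConst)
    (M : FOStruc L) (hM : IsFEA M) (s t : FOTerm L)
    (h g : ℕ → M.carrier) (heq : s.eval M h = t.eval M g) :
    ∀ s' t' : FOTerm L, InDiff s t (s', t') → s'.eval M h = t'.eval M g := by
  suffices H : ∀ p : FOTerm L × FOTerm L, InDiff s t p →
      s.eval M h = t.eval M g → p.1.eval M h = p.2.eval M g by
    intro s' t' hd
    exact H (s', t') hd heq
  intro p hd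
  induction hd with
  | var x => exact id
  | varVar hxy => exact id
  | varFunc x f ts => exact id
  | funcVar f ss y => exact id
  | funcFunc ss ts hfg => exact id
  | func ss ts i hd ih =>
    intro heq
    have harg : (ss i).eval M h = (ts i).eval M g := congrFun (hM.inj _ heq) i
    exact ih harg harg
end

section
/- Let M be a non-trivial model of the free equality axioms FEA(L). Then for all terms s and t over L: Inst_M(s) ⊆ Inst_M(t) if and only if there exists a substitution θ (a map assigning terms to variables) such that s ≡ tθ (s is syntactically identical to the result of applying θ to t). -/
section Aux

variable {L : FOLang}

theorem FOTerm.eval_congr (M : FOStruc L) {t : FOTerm L} {h h' : ℕ → M.carrier}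
    (H : ∀ x ∈ t.vars, h x = h' x) : t.eval M h = t.eval M h' := by
  induction t with
  | var x => exact H x (by simp [FOTerm.vars])
  | func f ts ih =>
    simp only [FOTerm.eval]
    congr 1
    funext i
    exact ih i fun x hx => H x (by
      simp only [FOTerm.vars, Finset.mem_biUnion, Finset.mem_univ, true_and]
      exact ⟨i, hx⟩)

theorem FOTerm.eval_applyT (M : FOStruc L) (θ : ℕ → FOTerm L) (t : FOTerm L)
    (h : ℕ → M.carrier) :
    (t.applyT θ).eval M h = t.eval M fun x => (θ x).eval M h := by
  induction t with
  | var x => rfl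
  | func f ts ih =>
    simp only [FOTerm.applyT, FOTerm.eval]
    congr 1
    funext i
    exact ih i

/-- An element outside the range of a given function symbol. -/
theorem range_escape (hc : L.HasConst) {M : FOStruc L} (hM : IsFEA M)
    (hnt : M.Nontriv) (g : L.Func) :
    ∃ a : M.carrier, ∀ v, a ≠ M.funcs g v := by
  by_cases hg : L.farity g = 0
  · obtain ⟨a, b, hab⟩ := hnt
    set v0 : Fin (L.farity g) → M.carrier := fun i => absurd i.isLt (by omega) with hv0
    have hall : ∀ v, M.funcs g v = M.funcs g v0 := by
      intro v
      congr 1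
      funext i
      exact absurd i.isLt (by omega)
    by_cases ha : a = M.funcs g v0
    · refine ⟨b, fun v => ?_⟩
      rw [hall v, ← ha]
      exact Ne.symm hab
    · exact ⟨a, fun v => by rw [hall v]; exact ha⟩
  · obtain ⟨c, hcz⟩ := hc
    have hcg : c ≠ g := fun h => hg (h ▸ hcz)
    exact ⟨M.funcs c (fun i => absurd i.isLt (by omega)), fun v => hM.disj c g hcg _ v⟩

/-- A variable can be separated from any functional term. -/
theorem sep_var_func {M : FOStruc L} (hM : IsFEA M) (hnt : M.Nontriv)
    (x : ℕ) (g : L.Func) (ts : Fin (L.farity g) → FOTerm L) :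
    ∃ h : ℕ → M.carrier, h x ≠ (FOTerm.func g ts).eval M h := by
  classical
  by_cases hx : x ∈ (FOTerm.func g ts).vars
  · exact ⟨fun _ => Classical.choice M.inhab,
      hM.occ x _ (fun h => by cases h) hx (fun _ => Classical.choice M.inhab)⟩
  · obtain ⟨a, b, hab⟩ := hnt
    set h0 : ℕ → M.carrier := fun _ => Classical.choice M.inhab with hh0
    set v : M.carrier := (FOTerm.func g ts).eval M h0 with hv
    set c : M.carrier := if v = a then b else a with hc'
    refine ⟨Function.update h0 x c, ?_⟩
    have hcv : c ≠ v := by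
      rw [hc']
      by_cases hva : v = a
      · rw [if_pos hva, hva]
        exact Ne.symm hab
      · rw [if_neg hva]
        exact fun h => hva h.symm
    have heq : (FOTerm.func g ts).eval M (Function.update h0 x c) = v := by
      rw [hv]
      exact FOTerm.eval_congr M fun z hz =>
        Function.update_of_ne (fun h => hx (by rw [← h]; exact hz)) _ _
    rw [Function.update_self, heq]
    exact hcv

/-- In a non-trivial model of FEA, distinct terms can be separated by some
valuation. -/
theorem separate {M : FOStruc L} (hM : IsFEA M) (hnt : M.Nontriv) :
    ∀ s1 s2 : FOTerm L, s1 ≠ s2 → ∃ h : ℕ → M.carrier, s1.eval M h ≠ s2.eval M h := by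
  intro s1
  induction s1 with
  | var x =>
    intro s2 hne
    cases s2 with
    | var y =>
      have hxy : x ≠ y := fun h => hne (h ▸ rfl)
      obtain ⟨a, b, hab⟩ := hnt
      refine ⟨fun z => if z = x then a else b, ?_⟩
      simp only [FOTerm.eval, if_pos rfl, if_neg (Ne.symm hxy)]
      exact hab
    | func g ts => exact sep_var_func hM hnt x g ts
  | func f ss ih =>
    intro s2 hne
    cases s2 with
    | var y =>
      obtain ⟨h, hh⟩ := sep_var_func hM hnt y f ss
      exact ⟨h, fun he => hh he.symm⟩
    | func g ts =>
      by_cases hfg : f = g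
      · subst hfg
        have hst : ss ≠ ts := fun h => hne (h ▸ rfl)
        have hex : ∃ i, ss i ≠ ts i := by
          by_contra hno
          push_neg at hno
          exact hst (funext hno)
        obtain ⟨i, hi⟩ := hex
        obtain ⟨h, hh⟩ := ih i (ts i) hi
        refine ⟨h, fun he => ?_⟩
        simp only [FOTerm.eval] at he
        exact hh (congrFun (hM.inj f he) i)
      · refine ⟨fun _ => Classical.choice M.inhab, ?_⟩
        simp only [FOTerm.eval]
        exact hM.disj f g hfg _ _

/-- If `s.eval h = t.eval g` then corresponding members of `Diff(s,t)` have
equal values. -/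
theorem diff_eval {M : FOStruc L} (hM : IsFEA M) {s t : FOTerm L}
    {p : FOTerm L × FOTerm L} (hd : InDiff s t p) :
    ∀ h g : ℕ → M.carrier, s.eval M h = t.eval M g →
      p.1.eval M h = p.2.eval M g := by
  induction hd with
  | var x => exact fun h g he => he
  | varVar hxy => exact fun h g he => he
  | varFunc x f ts => exact fun h g he => he
  | funcVar f ss y => exact fun h g he => he
  | funcFunc ss ts hfg => exact fun h g he => he
  | func ss ts i hsub ih =>
    intro h g he
    simp only [FOTerm.eval] at he
    exact ih h g (congrFun (hM.inj _ he) i)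

/-- Structure of members of the difference set. -/
theorem diff_shape {s t : FOTerm L} {p : FOTerm L × FOTerm L} (hd : InDiff s t p) :
    (∃ y, p.2 = FOTerm.var y) ∨
    ∃ g, ∃ ts : Fin (L.farity g) → FOTerm L, p.2 = FOTerm.func g ts ∧
      ((∃ x, p.1 = FOTerm.var x) ∨
        ∃ f, ∃ ss : Fin (L.farity f) → FOTerm L, p.1 = FOTerm.func f ss ∧ f ≠ g) := by
  induction hd with
  | var x => exact Or.inl ⟨x, rfl⟩
  | varVar hxy => exact Or.inl ⟨_, rfl⟩
  | varFunc x f ts => exact Or.inr ⟨f, ts, rfl, Or.inl ⟨x, rfl⟩⟩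
  | funcVar f ss y => exact Or.inl ⟨y, rfl⟩
  | funcFunc ss ts hfg => exact Or.inr ⟨_, ts, rfl, Or.inr ⟨_, ss, rfl, hfg⟩⟩
  | func ss ts i hsub ih => exact ih

open Classical in
/-- The substitution induced by the difference set. -/
noncomputable def matchSubst (s t : FOTerm L) : ℕ → FOTerm L :=
  fun y => if h : ∃ s', InDiff s t (s', FOTerm.var y) then h.choose else FOTerm.var y

theorem matchSubst_eq {s t : FOTerm L} {y : ℕ} {s' : FOTerm L}
    (hd : InDiff s t (s', FOTerm.var y))
    (h2 : ∀ (y : ℕ) (s1 s2 : FOTerm L), InDiff s t (s1, FOTerm.var y) →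
      InDiff s t (s2, FOTerm.var y) → s1 = s2) :
    matchSubst s t y = s' := by
  have hex : ∃ s'', InDiff s t (s'', FOTerm.var y) := ⟨s', hd⟩
  simp only [matchSubst, dif_pos hex]
  exact h2 y _ _ hex.choose_spec hd

/-- If the difference set only pairs terms with variables, functionally, then
`s` is an instance of `t`. -/
theorem matches_applyT (s t : FOTerm L)
    (h1 : ∀ p, InDiff s t p → ∃ y, p.2 = FOTerm.var y)
    (h2 : ∀ (y : ℕ) (s1 s2 : FOTerm L), InDiff s t (s1, FOTerm.var y) →
      InDiff s t (s2, FOTerm.var y) → s1 = s2) :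
    ∃ θ : ℕ → FOTerm L, s = t.applyT θ := by
  refine ⟨matchSubst s t, ?_⟩
  have H : ∀ t' s' : FOTerm L, (∀ p, InDiff s' t' p → InDiff s t p) →
      s' = t'.applyT (matchSubst s t) := by
    intro t'
    induction t' with
    | var y =>
      intro s' hemb
      have hd : InDiff s' (FOTerm.var y) (s', FOTerm.var y) := by
        cases s' with
        | var x =>
          by_cases hxy : x = y
          · subst hxy; exact .var x
          · exact .varVar hxy
        | func f ss => exact .funcVar f ss y
      have := matchSubst_eq (hemb _ hd) h2
      simp only [FOTerm.applyT, this]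
    | func g ts ih =>
      intro s' hemb
      cases s' with
      | var x =>
        exfalso
        obtain ⟨y, hy⟩ := h1 _ (hemb _ (.varFunc x g ts))
        simp at hy
      | func f ss =>
        by_cases hfg : f = g
        · subst hfg
          simp only [FOTerm.applyT]
          congr 1
          funext i
          exact ih i (ss i) fun p hp => hemb p (.func ss ts i hp)
        · exfalso
          obtain ⟨y, hy⟩ := h1 _ (hemb _ (.funcFunc ss ts hfg))
          simp at hy
  exact H t s fun p hp => hp

end Aux

/-- For a non-trivial model `M` of `FEA(L)`:
`Inst_M(s) ⊆ Inst_M(t)` iff `s` is an instance of `t` under some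
substitution. -/
theorem inst_subset_iff_instance {L : FOLang} (hc : L.HasConst)
    (M : FOStruc L) (hM : IsFEA M) (hnt : M.Nontriv) (s t : FOTerm L) :
    InstT M s ⊆ InstT M t ↔ ∃ θ : ℕ → FOTerm L, s = t.applyT θ := by
  constructor
  · intro hsub
    have h1 : ∀ p, InDiff s t p → ∃ y, p.2 = FOTerm.var y := by
      intro p hp
      rcases diff_shape hp with ⟨y, hy⟩ | ⟨g, ts, hy, hcase⟩
      · exact ⟨y, hy⟩
      · exfalso
        rcases hcase with ⟨x, hx⟩ | ⟨f, ss, hx, hfg⟩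
        · obtain ⟨a, ha⟩ := range_escape hc hM hnt g
          obtain ⟨g', hg'⟩ := hsub ⟨fun _ => a, rfl⟩
          have := diff_eval hM hp _ _ hg'.symm
          rw [hx, hy] at this
          simp only [FOTerm.eval] at this
          exact ha _ this
        · obtain ⟨g', hg'⟩ := hsub ⟨fun _ => Classical.choice M.inhab, rfl⟩
          have := diff_eval hM hp _ _ hg'.symm
          rw [hx, hy] at this
          simp only [FOTerm.eval] at this
          exact hM.disj f g hfg _ _ this
    have h2 : ∀ (y : ℕ) (s1 s2 : FOTerm L), InDiff s t (s1, FOTerm.var y) →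
        InDiff s t (s2, FOTerm.var y) → s1 = s2 := by
      intro y s1 s2 hd1 hd2
      by_contra hne
      obtain ⟨h, hh⟩ := separate hM hnt s1 s2 hne
      obtain ⟨g', hg'⟩ := hsub ⟨h, rfl⟩
      have e1 := diff_eval hM hd1 _ _ hg'.symm
      have e2 := diff_eval hM hd2 _ _ hg'.symm
      exact hh (e1.trans e2.symm)
    exact matches_applyT s t h1 h2
  · rintro ⟨θ, rfl⟩ a ⟨h, rfl⟩
    exact ⟨fun x => (θ x).eval M h, (FOTerm.eval_applyT M θ t h).symm⟩
end

section
/- Let M be a non-trivial model of the free equality axioms FEA(L). Then for all terms s and t over L, the following are equivalent: (i) Inst_M(s) = Inst_M(t); (ii) s ≡ tθ and t ≡ sθ' for some substitutions θ, θ'; (iii) s and t are variants, i.e., s ≡ tθ for some substitution θ that maps the variables of t injectively to variables. -/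
section Aux

namespace FOTerm

variable {L : FOLang}

/-- Size of a term. -/
def size : FOTerm L → ℕ
  | .var _ => 1
  | .func _ ts => 1 + Finset.univ.sum fun i => (ts i).size

theorem eval_applyT_s3 (M : FOStruc L) (f : ℕ → FOTerm L) (h : ℕ → M.carrier) :
    ∀ t : FOTerm L, (t.applyT f).eval M h = t.eval M (fun x => (f x).eval M h)
  | .var _ => rfl
  | .func g ts => by
      simp only [applyT, eval]
      congr 1
      funext i
      exact eval_applyT_s3 M f h (ts i)

theorem applyT_applyT (f g : ℕ → FOTerm L) :
    ∀ t : FOTerm L, (t.applyT f).applyT g = t.applyT (fun x => (f x).applyT g)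
  | .var _ => rfl
  | .func c ts => by
      simp only [applyT, func.injEq, heq_eq_eq, true_and]
      funext i
      exact applyT_applyT f g (ts i)

theorem applyT_eq_self (f : ℕ → FOTerm L) :
    ∀ t : FOTerm L, (∀ x ∈ t.vars, f x = .var x) → t.applyT f = t
  | .var x, h => h x (by simp [vars])
  | .func c ts, h => by
      simp only [applyT, func.injEq, heq_eq_eq, true_and]
      funext i
      refine applyT_eq_self f (ts i) fun x hx => h x ?_
      simp only [vars, Finset.mem_biUnion, Finset.mem_univ, true_and]
      exact ⟨i, hx⟩

theorem eq_var_of_applyT_eq_self (f : ℕ → FOTerm L) :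
    ∀ t : FOTerm L, t.applyT f = t → ∀ x ∈ t.vars, f x = .var x
  | .var y, h, x, hx => by
      simp only [vars, Finset.mem_singleton] at hx
      subst hx
      exact h
  | .func c ts, h, x, hx => by
      simp only [applyT, func.injEq, heq_eq_eq, true_and] at h
      simp only [vars, Finset.mem_biUnion, Finset.mem_univ, true_and] at hx
      obtain ⟨i, hi⟩ := hx
      exact eq_var_of_applyT_eq_self f (ts i) (congrFun h i) x hi

end FOTerm

variable {L : FOLang}

/-- In a non-trivial model of FEA, every function symbol misses some element. -/
theorem exists_not_in_range (hc : L.HasConst) (M : FOStruc L) (hM : IsFEA M)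
    (hnt : M.Nontriv) (g : L.Func) :
    ∃ e : M.carrier, ∀ a : Fin (L.farity g) → M.carrier, e ≠ M.funcs g a := by
  obtain ⟨c, hcar⟩ := hc
  by_cases hgc : g = c
  · subst hgc
    obtain ⟨a, b, hab⟩ := hnt
    have hconst : ∀ a' b' : Fin (L.farity g) → M.carrier,
        M.funcs g a' = M.funcs g b' := by
      intro a' b'
      congr 1
      funext i
      exact (Fin.cast hcar i).elim0
    set v := M.funcs g (fun _ => a) with hv
    by_cases hav : a = v
    · refine ⟨b, fun x hx => ?_⟩
      rw [hconst x (fun _ => a), ← hv, ← hav] at hx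
      exact hab hx.symm
    · refine ⟨a, fun x hx => ?_⟩
      rw [hconst x (fun _ => a), ← hv] at hx
      exact hav hx
  · refine ⟨M.funcs c (fun i => (Fin.cast hcar i).elim0), fun a h => ?_⟩
    exact hM.disj c g (fun e => hgc e.symm) _ a h

/-- The key lemma: joint instance–set equality yields a variable renaming. -/
theorem key_lemma (hc : L.HasConst) (M : FOStruc L) (hM : IsFEA M)
    (hnt : M.Nontriv) :
    ∀ (n : ℕ) (l : List (FOTerm L × FOTerm L)),
    (l.map fun p => p.2.size).sum < n →
    (∀ h : ℕ → M.carrier, ∃ h', ∀ p ∈ l, p.1.eval M h = p.2.eval M h') →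
    (∀ h' : ℕ → M.carrier, ∃ h, ∀ p ∈ l, p.1.eval M h = p.2.eval M h') →
    ∃ ρ : ℕ → ℕ,
      Set.InjOn ρ {y | ∃ p ∈ l, y ∈ p.2.vars} ∧
      ∀ p ∈ l, p.1 = p.2.applyT fun y => FOTerm.var (ρ y) := by
  classical
  intro n
  induction n with
  | zero => intro l hlt; omega
  | succ n IH =>
    intro l hlt P Q
    by_cases hvar : ∀ p ∈ l, ∃ y : ℕ, p.2 = FOTerm.var y
    · -- terminal case: all right-hand sides are variables
      obtain ⟨a, b, hab⟩ := hnt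
      -- all left-hand sides are variables too
      have h1 : ∀ p ∈ l, ∃ x : ℕ, p.1 = FOTerm.var x := by
        intro p hp
        rcases hp1 : p.1 with x | ⟨g, rr⟩
        · exact ⟨x, rfl⟩
        · exfalso
          obtain ⟨e, he⟩ := exists_not_in_range hc M hM ⟨a, b, hab⟩ g
          obtain ⟨h, hh⟩ := Q (fun _ => e)
          obtain ⟨y, hy⟩ := hvar p hp
          have := hh p hp
          rw [hp1, hy] at this
          exact he _ this.symm
      -- well-definedness
      have uniq : ∀ x x' y : ℕ, (FOTerm.var x, FOTerm.var y) ∈ l →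
          (FOTerm.var x', FOTerm.var y) ∈ l → x = x' := by
        intro x x' y hx hx'
        by_contra hne
        obtain ⟨h', hh⟩ := P (fun z => if z = x then a else b)
        have e1 := hh _ hx
        have e2 := hh _ hx'
        simp only [FOTerm.eval, if_true] at e1 e2
        rw [if_neg (fun h => hne h.symm)] at e2
        exact hab (e1.trans e2.symm)
      set ρ : ℕ → ℕ := fun y =>
        if h : ∃ x, (FOTerm.var x, FOTerm.var y) ∈ l then h.choose else y with hρ
      have hρ_spec : ∀ x y : ℕ, (FOTerm.var x, FOTerm.var y) ∈ l → ρ y = x := by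
        intro x y hxy
        have hex : ∃ x, (FOTerm.var x, FOTerm.var y) ∈ l := ⟨x, hxy⟩
        rw [hρ]
        simp only [dif_pos hex]
        exact uniq _ _ y hex.choose_spec hxy
      have hmemS : ∀ y, (∃ p ∈ l, y ∈ p.2.vars) ↔
          ∃ x, (FOTerm.var x, FOTerm.var y) ∈ l := by
        intro y
        constructor
        · rintro ⟨p, hp, hyp⟩
          obtain ⟨y', hy'⟩ := hvar p hp
          obtain ⟨x, hx⟩ := h1 p hp
          rw [hy'] at hyp
          simp only [FOTerm.vars, Finset.mem_singleton] at hyp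
          subst hyp
          refine ⟨x, ?_⟩
          have : p = (FOTerm.var x, FOTerm.var y) := Prod.ext hx hy'
          rwa [this] at hp
        · rintro ⟨x, hx⟩
          exact ⟨_, hx, by simp [FOTerm.vars]⟩
      refine ⟨ρ, ?_, ?_⟩
      · intro y hy y' hy' heq
        rw [Set.mem_setOf_eq, hmemS] at hy hy'
        obtain ⟨x, hx⟩ := hy
        obtain ⟨x', hx'⟩ := hy'
        have r1 := hρ_spec _ _ hx
        have r2 := hρ_spec _ _ hx'
        by_contra hne
        obtain ⟨h, hh⟩ := Q (fun z => if z = y then a else b)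
        have e1 := hh _ hx
        have e2 := hh _ hx'
        simp only [FOTerm.eval, if_true] at e1 e2
        rw [if_neg (fun h => hne h.symm)] at e2
        rw [r1, r2] at heq
        rw [heq] at e1
        exact hab (e1.symm.trans e2)
      · intro p hp
        obtain ⟨y, hy⟩ := hvar p hp
        obtain ⟨x, hx⟩ := h1 p hp
        have hmem : (FOTerm.var x, FOTerm.var y) ∈ l := by
          have : p = (FOTerm.var x, FOTerm.var y) := Prod.ext hx hy
          rwa [this] at hp
        rw [hx, hy]
        simp only [FOTerm.applyT, FOTerm.var.injEq]
        exact (hρ_spec _ _ hmem).symm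
    · -- inductive step
      push_neg at hvar
      obtain ⟨p, hp, hpv⟩ := hvar
      rcases hp2 : p.2 with y | ⟨g, ts⟩
      · exact absurd hp2 (hpv y)
      -- p.1 must be headed by g too
      have hne : Nonempty M.carrier := M.inhab
      obtain ⟨a0⟩ := hne
      have h1 : ∃ ss : Fin (L.farity g) → FOTerm L, p.1 = FOTerm.func g ss := by
        rcases hp1 : p.1 with x | ⟨g', ss⟩
        · exfalso
          obtain ⟨e, he⟩ := exists_not_in_range hc M hM hnt g
          obtain ⟨h', hh⟩ := P (fun _ => e)
          have := hh p hp
          rw [hp1, hp2] at this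
          exact he _ this
        · by_cases hgg : g' = g
          · subst hgg; exact ⟨ss, rfl⟩
          · exfalso
            obtain ⟨h', hh⟩ := P (fun _ => a0)
            have := hh p hp
            rw [hp1, hp2] at this
            exact hM.disj g' g hgg _ _ this
      obtain ⟨ss, hp1⟩ := h1
      obtain ⟨A, B, hAB⟩ := List.append_of_mem hp
      set l' : List (FOTerm L × FOTerm L) :=
        (List.ofFn fun j => (ss j, ts j)) ++ (A ++ B) with hl'
      have hmem_l' : ∀ q ∈ A ++ B, q ∈ l := by
        intro q hq
        rw [hAB]
        rcases List.mem_append.1 hq with h | h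
        · exact List.mem_append.2 (Or.inl h)
        · exact List.mem_append.2 (Or.inr (List.mem_cons_of_mem _ h))
      -- measure decreases
      have hsize : (l'.map fun q => q.2.size).sum < n := by
        have h2 : (l.map fun q => q.2.size).sum =
            ((A.map fun q => q.2.size).sum + p.2.size)
              + (B.map fun q => q.2.size).sum := by
          rw [hAB]
          simp only [List.map_append, List.sum_append, List.map_cons, List.sum_cons]
          omega
        have h3 : (l'.map fun q => q.2.size).sum =
            (Finset.univ.sum fun j => (ts j).size)
              + ((A.map fun q => q.2.size).sum + (B.map fun q => q.2.size).sum) := by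
          rw [hl']
          simp only [List.map_append, List.sum_append, List.map_ofFn,
            List.sum_ofFn, Function.comp]
        have h4 : p.2.size = 1 + Finset.univ.sum fun j => (ts j).size := by
          rw [hp2]; rfl
        omega
      -- transfer P and Q
      have hPQ : ∀ (h h' : ℕ → M.carrier),
          (∀ q ∈ l, q.1.eval M h = q.2.eval M h') →
          ∀ q ∈ l', q.1.eval M h = q.2.eval M h' := by
        intro h h' hall q hq
        rcases List.mem_append.1 hq with hof | hab'
        · obtain ⟨j, hj⟩ := List.mem_ofFn.1 hof
          have := hall p hp
          rw [hp1, hp2] at this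
          simp only [FOTerm.eval] at this
          have := congrFun (hM.inj g this) j
          rw [← hj]
          exact this
        · exact hall q (hmem_l' q hab')
      have P' : ∀ h : ℕ → M.carrier, ∃ h', ∀ q ∈ l', q.1.eval M h = q.2.eval M h' := by
        intro h; obtain ⟨h', hall⟩ := P h; exact ⟨h', hPQ h h' hall⟩
      have Q' : ∀ h' : ℕ → M.carrier, ∃ h, ∀ q ∈ l', q.1.eval M h = q.2.eval M h' := by
        intro h'; obtain ⟨h, hall⟩ := Q h'; exact ⟨h, hPQ h h' hall⟩
      obtain ⟨ρ, hinj, heqs⟩ := IH l' hsize P' Q'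
      have hSsub : {y | ∃ q ∈ l, y ∈ q.2.vars} ⊆ {y | ∃ q ∈ l', y ∈ q.2.vars} := by
        rintro y ⟨q, hq, hyq⟩
        rw [hAB] at hq
        rcases List.mem_append.1 hq with h | h
        · exact ⟨q, List.mem_append.2 (Or.inr (List.mem_append.2 (Or.inl h))), hyq⟩
        · rcases List.mem_cons.1 h with h | h
          · subst h
            rw [hp2] at hyq
            simp only [FOTerm.vars, Finset.mem_biUnion, Finset.mem_univ, true_and] at hyq
            obtain ⟨j, hj⟩ := hyq
            refine ⟨(ss j, ts j), ?_, hj⟩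
            exact List.mem_append.2 (Or.inl (List.mem_ofFn.2 ⟨j, rfl⟩))
          · exact ⟨q, List.mem_append.2 (Or.inr (List.mem_append.2 (Or.inr h))), hyq⟩
      refine ⟨ρ, hinj.mono hSsub, ?_⟩
      intro q hq
      rw [hAB] at hq
      rcases List.mem_append.1 hq with h | h
      · exact heqs q (List.mem_append.2 (Or.inr (List.mem_append.2 (Or.inl h))))
      rcases List.mem_cons.1 h with h | h
      · subst h
        rw [hp1, hp2]
        simp only [FOTerm.applyT, FOTerm.func.injEq, heq_eq_eq, true_and]
        funext j
        exact heqs (ss j, ts j)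
          (List.mem_append.2 (Or.inl (List.mem_ofFn.2 ⟨j, rfl⟩)))
      · exact heqs q (List.mem_append.2 (Or.inr (List.mem_append.2 (Or.inr h))))

end Aux

/-- For a non-trivial model `M` of `FEA(L)` the following
are equivalent: `Inst_M(s) = Inst_M(t)`; `s ≼ t` and `t ≼ s`; `s` and `t`
are variants. -/
theorem inst_eq_iff_variants {L : FOLang} (hc : L.HasConst)
    (M : FOStruc L) (hM : IsFEA M) (hnt : M.Nontriv) (s t : FOTerm L) :
    (InstT M s = InstT M t ↔
      (∃ θ : ℕ → FOTerm L, s = t.applyT θ) ∧ (∃ θ' : ℕ → FOTerm L, t = s.applyT θ')) ∧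
    ((∃ θ : ℕ → FOTerm L, s = t.applyT θ) ∧ (∃ θ' : ℕ → FOTerm L, t = s.applyT θ') ↔
      ∃ θ : ℕ → FOTerm L, (∀ x ∈ t.vars, ∃ y : ℕ, θ x = .var y) ∧
        Set.InjOn θ ↑t.vars ∧ s = t.applyT θ) := by
  classical
  have keyfn : InstT M s = InstT M t →
      ∃ θ : ℕ → FOTerm L, (∀ x ∈ t.vars, ∃ y : ℕ, θ x = .var y) ∧
        Set.InjOn θ ↑t.vars ∧ s = t.applyT θ := by
    intro hinst
    have P : ∀ h : ℕ → M.carrier, ∃ h',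
        ∀ p ∈ [(s, t)], p.1.eval M h = p.2.eval M h' := by
      intro h
      have hs : s.eval M h ∈ InstT M s := ⟨h, rfl⟩
      rw [hinst] at hs
      obtain ⟨h', hh'⟩ := hs
      refine ⟨h', ?_⟩
      intro p hp
      rw [List.mem_singleton.1 hp]
      exact hh'.symm
    have Q : ∀ h' : ℕ → M.carrier, ∃ h,
        ∀ p ∈ [(s, t)], p.1.eval M h = p.2.eval M h' := by
      intro h'
      have ht : t.eval M h' ∈ InstT M t := ⟨h', rfl⟩
      rw [← hinst] at ht
      obtain ⟨h, hh⟩ := ht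
      refine ⟨h, ?_⟩
      intro p hp
      rw [List.mem_singleton.1 hp]
      exact hh
    obtain ⟨ρ, hinj, heqs⟩ := key_lemma hc M hM hnt _ [(s, t)]
      (Nat.lt_succ_self _) P Q
    refine ⟨fun y => FOTerm.var (ρ y), fun x _ => ⟨ρ x, rfl⟩, ?_, ?_⟩
    · intro x hx x' hx' hxx'
      refine hinj ⟨(s, t), List.mem_singleton_self _, by simpa using hx⟩
        ⟨(s, t), List.mem_singleton_self _, by simpa using hx'⟩ ?_
      exact FOTerm.var.inj hxx'
    · exact heqs (s, t) (List.mem_singleton_self _)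
  constructor
  · constructor
    · intro hinst
      obtain ⟨θ, _, _, hs⟩ := keyfn hinst
      refine ⟨⟨θ, hs⟩, ?_⟩
      -- symmetric direction for t
      have P : ∀ h : ℕ → M.carrier, ∃ h',
          ∀ p ∈ [(t, s)], p.1.eval M h = p.2.eval M h' := by
        intro h
        have ht : t.eval M h ∈ InstT M t := ⟨h, rfl⟩
        rw [← hinst] at ht
        obtain ⟨h', hh'⟩ := ht
        refine ⟨h', ?_⟩
        intro p hp
        rw [List.mem_singleton.1 hp]
        exact hh'.symm
      have Q : ∀ h' : ℕ → M.carrier, ∃ h,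
          ∀ p ∈ [(t, s)], p.1.eval M h = p.2.eval M h' := by
        intro h'
        have hs' : s.eval M h' ∈ InstT M s := ⟨h', rfl⟩
        rw [hinst] at hs'
        obtain ⟨h, hh⟩ := hs'
        refine ⟨h, ?_⟩
        intro p hp
        rw [List.mem_singleton.1 hp]
        exact hh
      obtain ⟨ρ, _, heqs⟩ := key_lemma hc M hM hnt _ [(t, s)]
        (Nat.lt_succ_self _) P Q
      exact ⟨_, heqs (t, s) (List.mem_singleton_self _)⟩
    · rintro ⟨⟨θ, hs⟩, ⟨θ', ht⟩⟩
      ext a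
      simp only [InstT, Set.mem_setOf_eq]
      constructor
      · rintro ⟨h, rfl⟩
        rw [hs, FOTerm.eval_applyT_s3]
        exact ⟨_, rfl⟩
      · rintro ⟨h, rfl⟩
        rw [ht, FOTerm.eval_applyT_s3]
        exact ⟨_, rfl⟩
  · constructor
    · rintro ⟨⟨θ, hs⟩, ⟨θ', ht⟩⟩
      have htt : t.applyT (fun x => (θ x).applyT θ') = t := by
        rw [← FOTerm.applyT_applyT, ← hs, ← ht]
      have hvar := FOTerm.eq_var_of_applyT_eq_self _ t htt
      refine ⟨θ, ?_, ?_, hs⟩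
      · intro x hx
        have hx' := hvar x hx
        rcases hθx : θ x with y | ⟨g, rr⟩
        · exact ⟨y, rfl⟩
        · rw [hθx] at hx'
          simp only [FOTerm.applyT] at hx'
          exact absurd hx' (by simp)
      · intro x hx x' hx' hxx'
        have e1 := hvar x hx
        have e2 := hvar x' hx'
        rw [hxx'] at e1
        have := e1.symm.trans e2
        exact FOTerm.var.inj this
    · rintro ⟨θ, hv, hinj, hs⟩
      refine ⟨⟨θ, hs⟩, ?_⟩
      set θ' : ℕ → FOTerm L := fun y =>
        if h : ∃ x ∈ t.vars, θ x = FOTerm.var y then FOTerm.var h.choose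
        else FOTerm.var y with hθ'
      refine ⟨θ', ?_⟩
      rw [hs, FOTerm.applyT_applyT]
      symm
      apply FOTerm.applyT_eq_self
      intro x hx
      obtain ⟨y, hy⟩ := hv x hx
      rw [hy]
      simp only [FOTerm.applyT]
      have hex : ∃ x' ∈ t.vars, θ x' = FOTerm.var y := ⟨x, hx, hy⟩
      rw [hθ']
      simp only [dif_pos hex]
      obtain ⟨hmem, hspec⟩ := hex.choose_spec
      have : hex.choose = x := hinj hmem hx (hspec.trans hy.symm)
      rw [this]
end
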